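/- The cohomology of the complex (L, d) in total degree 4 (i.e. the space of d-cocycles of total degree 4 modulo d-coboundaries of total degree 4) is a one-dimensional ℚ-vector space, spanned by the class of the element 1 ⊗ rs. (In the paper this shows that H⁴(Im Emb_ω(c,μ); ℚ) is one-dimensional, which forces d(h) = k·b·g with k ≠ 0 in the minimal model.) -/

import Mathlib

/-!
Statement 10: the cohomology of the Koszul complex `(L, d)` in total degree 4 (the image of
the space of `d`-cocycles of total degree 4 in `L / im d`, i.e. cocycles modulo
coboundaries) is a one-dimensional ℚ-vector space, spanned by the class of `1 ⊗ rs`.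
-/

set_option synthInstance.maxHeartbeats 1000000
set_option maxHeartbeats 2000000

noncomputable section

open MvPolynomial

/-- The polynomial ring ℚ[z,r,s]. -/
abbrev P3 : Type := MvPolynomial (Fin 3) ℚ

/-- The ideal `⟨z(r−s)⟩`. -/
def relB : Ideal P3 := Ideal.span {(X 0 : P3) * (X 1 - X 2)}

/-- `B = ℚ[z,r,s]/⟨z(r−s)⟩`. -/
abbrev Bring : Type := P3 ⧸ relB

/-- The image of `z` in `B`. -/
def zB : Bring := Ideal.Quotient.mk relB (X 0)
/-- The image of `r` in `B`. -/
def rB : Bring := Ideal.Quotient.mk relB (X 1)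
/-- The image of `s` in `B`. -/
def sB : Bring := Ideal.Quotient.mk relB (X 2)

/-- The degree-`m` (internal degree) component `B_m` of `B`, where `z, r, s` have
degree 2. -/
def Bgrade (m : ℕ) : Submodule ℚ Bring :=
  if 2 ∣ m then
    Submodule.map (Ideal.Quotient.mkₐ ℚ relB).toLinearMap
      (homogeneousSubmodule (Fin 3) ℚ (m / 2))
  else ⊥

/-- Index of the `B`-basis of `L = Λ(α,β,γ,δ) ⊗ B`: the monomials
`δⁿ·α^{ε₁}·β^{ε₂}·γ^{ε₃}`, encoded as `(n, ε₁, ε₂, ε₃)`. -/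
abbrev idxL : Type := ℕ × Bool × Bool × Bool

/-- `L = Λ(α,β,γ,δ) ⊗ B`, as the free `B`-module on the monomials
`δⁿ·α^{ε₁}·β^{ε₂}·γ^{ε₃}`. -/
abbrev Lmod : Type := idxL →₀ Bring

/-- Total degree of the basis monomial `(n, ε₁, ε₂, ε₃)` (external + internal degree):
`δ` has total degree 4, `α` total degree 1, and `β, γ` total degree 3. -/
def Ldeg : idxL → ℕ :=
  fun p => 4 * p.1 + (if p.2.1 then 1 else 0) + (if p.2.2.1 then 3 else 0) +
    (if p.2.2.2 then 3 else 0)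

/-- The part of the differential coming from `d(δⁿ) = n·δ^{n−1}·α·(r²−s²)`. -/
def dvalDelta : idxL → Lmod
  | (0, _, _, _) => 0
  | (_ + 1, true, _, _) => 0
  | (n + 1, false, e2, e3) =>
      Finsupp.single (n, true, e2, e3) (((n : ℚ) + 1) • (rB ^ 2 - sB ^ 2))

/-- The part of the differential coming from `d(α) = z`, `d(β) = r²`, `d(γ) = s²`, extended
to the exterior monomials by the graded Leibniz rule. -/
def dvalExt : idxL → Lmod
  | (_, false, false, false) => 0
  | (n, true, false, false) => Finsupp.single (n, false, false, false) zB
  | (n, false, true, false) => Finsupp.single (n, false, false, false) (rB ^ 2)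
  | (n, false, false, true) => Finsupp.single (n, false, false, false) (sB ^ 2)
  | (n, true, true, false) =>
      Finsupp.single (n, false, true, false) zB -
        Finsupp.single (n, true, false, false) (rB ^ 2)
  | (n, true, false, true) =>
      Finsupp.single (n, false, false, true) zB -
        Finsupp.single (n, true, false, false) (sB ^ 2)
  | (n, false, true, true) =>
      Finsupp.single (n, false, false, true) (rB ^ 2) -
        Finsupp.single (n, false, true, false) (sB ^ 2)
  | (n, true, true, true) =>
      Finsupp.single (n, false, true, true) zB -
        Finsupp.single (n, true, false, true) (rB ^ 2) +
        Finsupp.single (n, true, true, false) (sB ^ 2)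

/-- The value of the differential on the basis monomial `δⁿ·α^{ε₁}·β^{ε₂}·γ^{ε₃}`. -/
def dval : idxL → Lmod := fun p => dvalDelta p + dvalExt p

/-- The `B`-linear differential `d` of the Koszul complex `L`, determined by
`d(α) = z`, `d(β) = r²`, `d(γ) = s²`, `d(δ) = α·(r²−s²)` and the graded Leibniz rule. -/
def dL : Lmod →ₗ[Bring] Lmod := Finsupp.linearCombination Bring dval

/-- `d`, as a ℚ-linear map. -/
def dQ : Lmod →ₗ[ℚ] Lmod := dL.restrictScalars ℚ

/-- The total-degree-`m` component of `L`: the span of the elements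
`(basis monomial of total degree t) ⊗ (element of B_{m−t})`. -/
def LtotalGrade (m : ℕ) : Submodule ℚ Lmod :=
  Submodule.span ℚ
    {w : Lmod | ∃ i u, Ldeg i ≤ m ∧ u ∈ Bgrade (m - Ldeg i) ∧ w = Finsupp.single i u}

/-- The element `δ` of `L`. -/
def δL : Lmod := Finsupp.single (1, false, false, false) 1
/-- The element `α·β` of `L`. -/
def abL : Lmod := Finsupp.single (0, true, true, false) 1
/-- The element `α·γ` of `L`. -/
def agL : Lmod := Finsupp.single (0, true, false, true) 1
/-- The embedding `B → L`, `u ↦ 1 ⊗ u`. -/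
def embL : Bring →ₗ[ℚ] Lmod := Finsupp.lsingle (0, false, false, false)

/-
In total degree 4, `L` is `1 ⊗ B₄` plus the ℚ-multiples of `αβ`, `αγ` and `δ`, and
`d(a αβ + b αγ + c δ) = a z β + b z γ + (c (r² - s²) - a r² - b s²) α`.
As `z ≠ 0` and `r² - s² ≠ 0` in `B`, every cocycle of degree 4 is `1 ⊗ u` with `u ∈ B₄`.
Coboundaries meet `1 ⊗ B` exactly in `1 ⊗ (z, r², s²)`, and `B₄` modulo this ideal is the image
of the quadrics of `ℚ[z,r,s]` modulo the monomial ideal `(z, r², s²)`, spanned by `rs`.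
-/

theorem Submodule.finrank_map_mkQ_eq_one {K V : Type*} [DivisionRing K] [AddCommGroup V]
    [Module K V] {Z R : Submodule K V} {v : V} (hvZ : v ∈ Z) (hvR : v ∉ R)
    (hZ : Z ≤ (K ∙ v) ⊔ R) : Module.finrank K (Z.map R.mkQ) = 1 := by
  have hmap : Z.map R.mkQ = K ∙ R.mkQ v := by
    refine le_antisymm ?_ ?_
    · refine (Submodule.map_mono hZ).trans ?_
      rw [Submodule.map_sup, Submodule.map_span, Set.image_singleton, Submodule.mkQ_map_self,
        sup_bot_eq]
    · exact (Submodule.span_singleton_le_iff_mem _ _).mpr (Submodule.mem_map_of_mem hvZ)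
  rw [hmap]
  exact finrank_span_singleton (by simpa using hvR)

abbrev rsExp : Fin 3 →₀ ℕ := Finsupp.single 1 1 + Finsupp.single 2 1

lemma eq_rsExp_iff (m : Fin 3 →₀ ℕ) : m = rsExp ↔ m 0 = 0 ∧ m 1 = 1 ∧ m 2 = 1 := by
  constructor
  · rintro rfl; simp
  · rintro ⟨h0, h1, h2⟩
    ext j
    fin_cases j <;> simp [h0, h1, h2]

lemma mem_span_X_zero_X_one_sq_X_two_sq_iff {p : P3} :
    p ∈ Ideal.span {(X 0 : P3), X 1 ^ 2, X 2 ^ 2} ↔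
      ∀ m ∈ p.support, 1 ≤ m 0 ∨ 2 ≤ m 1 ∨ 2 ≤ m 2 := by
  have hspan : ({(X 0 : P3), X 1 ^ 2, X 2 ^ 2} : Set P3) = (fun s => monomial s (1 : ℚ)) ''
      {Finsupp.single 0 1, Finsupp.single 1 2, Finsupp.single 2 2} := by
    simp [Set.image_insert_eq, X, monomial_pow]
  rw [hspan, mem_ideal_span_monomial_image]
  simp [Finsupp.single_le_iff]

lemma X_one_mul_X_two_notMem : (X 1 * X 2 : P3) ∉ Ideal.span {(X 0 : P3), X 1 ^ 2, X 2 ^ 2} := by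
  have : (X 1 * X 2 : P3) = monomial rsExp 1 := by simp [X, monomial_mul]
  rw [mem_span_X_zero_X_one_sq_X_two_sq_iff, this, support_monomial, if_neg one_ne_zero]
  simp

lemma sub_coeff_rsExp_mem {p : P3} (hp : p.IsHomogeneous 2) :
    p - coeff rsExp p • (X 1 * X 2) ∈ Ideal.span {(X 0 : P3), X 1 ^ 2, X 2 ^ 2} := by
  rw [mem_span_X_zero_X_one_sq_X_two_sq_iff]
  intro m hm
  have hX : (X 1 * X 2 : P3) = monomial rsExp 1 := by simp [X, monomial_mul]
  rw [hX, smul_monomial, smul_eq_mul, mul_one, mem_support_iff, coeff_sub, coeff_monomial] at hm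
  have hne : m ≠ rsExp := by rintro rfl; simp at hm
  rw [if_neg hne.symm, sub_zero] at hm
  have hdeg : m 0 + m 1 + m 2 = 2 := by
    by_contra h
    refine hm (hp.coeff_eq_zero ?_)
    rwa [Finsupp.degree_eq_sum, Fin.sum_univ_three]
  rw [Ne, eq_rsExp_iff] at hne
  omega

-- Generated by `d α`, `d β`, `d γ`; it contains the `1 ⊗ B`-component of every coboundary.
def idealZRS : Ideal Bring := Ideal.span {zB, rB ^ 2, sB ^ 2}

lemma idealZRS_eq_map :
    idealZRS = (Ideal.span {(X 0 : P3), X 1 ^ 2, X 2 ^ 2}).map (Ideal.Quotient.mk relB) := by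
  simp [idealZRS, Ideal.map_span, Set.image_insert_eq, zB, rB, sB]

lemma relB_le_span_X_zero_X_one_sq_X_two_sq :
    relB ≤ Ideal.span {(X 0 : P3), X 1 ^ 2, X 2 ^ 2} := by
  rw [relB, Ideal.span_singleton_le_iff_mem]
  exact Ideal.mul_mem_right _ _ (Ideal.subset_span (by simp))

lemma rB_mul_sB_notMem_idealZRS : rB * sB ∉ idealZRS := by
  rw [idealZRS_eq_map, rB, sB, ← map_mul,
    Ideal.mem_quotient_iff_mem relB_le_span_X_zero_X_one_sq_X_two_sq]
  exact X_one_mul_X_two_notMem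

lemma Bgrade_four_le : Bgrade 4 ≤ (ℚ ∙ (rB * sB)) ⊔ idealZRS.restrictScalars ℚ := by
  rw [Bgrade, if_pos (by norm_num)]
  rintro _ ⟨p, hp, rfl⟩
  set c := coeff rsExp p
  have hsplit : (Ideal.Quotient.mkₐ ℚ relB).toLinearMap p =
      c • (rB * sB) + (Ideal.Quotient.mkₐ ℚ relB).toLinearMap (p - c • (X 1 * X 2)) := by
    rw [map_sub, map_smul]
    exact (add_sub_cancel _ _).symm
  rw [hsplit]
  refine Submodule.add_mem_sup (Submodule.smul_mem _ c (Submodule.mem_span_singleton_self _)) ?_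
  rw [Submodule.restrictScalars_mem, idealZRS_eq_map]
  exact Ideal.mem_map_of_mem _ (sub_coeff_rsExp_mem hp)

lemma exists_eq_smul_one_of_mem_Bgrade_zero {u : Bring} (hu : u ∈ Bgrade 0) :
    ∃ q : ℚ, u = q • 1 := by
  rw [Bgrade, if_pos (dvd_zero 2), homogeneousSubmodule_zero] at hu
  obtain ⟨p, hp, rfl⟩ := hu
  obtain ⟨q, rfl⟩ := Submodule.mem_one.mp hp
  exact ⟨q, by simp [Algebra.algebraMap_eq_smul_one]⟩

lemma Bgrade_eq_bot {m : ℕ} (hm : ¬ 2 ∣ m) : Bgrade m = ⊥ := if_neg hm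

def evalB (v : Fin 3 → ℚ) (hv : v 0 * (v 1 - v 2) = 0) : Bring →+* ℚ :=
  Ideal.Quotient.lift relB (eval v) fun a ha => by
    obtain ⟨f, rfl⟩ := Ideal.mem_span_singleton'.mp ha
    simp [hv]

lemma zB_ne_zero : zB ≠ 0 := fun h => by
  simpa [zB, evalB] using congrArg (evalB (fun _ => 1) (by norm_num)) h

lemma rB_sq_sub_sB_sq_ne_zero : rB ^ 2 - sB ^ 2 ≠ 0 := fun h => by
  simpa [rB, sB, evalB] using congrArg (evalB ![0, 1, 0] (by norm_num)) h

lemma dQ_single (i : idxL) (u : Bring) : dQ (Finsupp.single i u) = u • dval i :=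
  Finsupp.linearCombination_single _ _ _

lemma dQ_embL (u : Bring) : dQ (embL u) = 0 := by
  simp [embL, dQ_single, dval, dvalDelta, dvalExt]

lemma dQ_abL : dQ abL = Finsupp.single (0, false, true, false) zB -
    Finsupp.single (0, true, false, false) (rB ^ 2) := by
  simp [abL, dQ_single, dval, dvalDelta, dvalExt]

lemma dQ_agL : dQ agL = Finsupp.single (0, false, false, true) zB -
    Finsupp.single (0, true, false, false) (sB ^ 2) := by
  simp [agL, dQ_single, dval, dvalDelta, dvalExt]

lemma dQ_δL : dQ δL = Finsupp.single (0, true, false, false) (rB ^ 2 - sB ^ 2) := by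
  simp [δL, dQ_single, dval, dvalDelta, dvalExt]

lemma dval_apply_mem_idealZRS (i : idxL) : dval i (0, false, false, false) ∈ idealZRS := by
  have hz : zB ∈ idealZRS := Ideal.subset_span (by simp)
  have hr : rB ^ 2 ∈ idealZRS := Ideal.subset_span (by simp)
  have hs : sB ^ 2 ∈ idealZRS := Ideal.subset_span (by simp)
  obtain ⟨_ | _, _ | _, _ | _, _ | _⟩ := i <;>
    simp [dval, dvalDelta, dvalExt, hz, hr, hs]

lemma dQ_apply_mem_idealZRS (w : Lmod) : dQ w (0, false, false, false) ∈ idealZRS := by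
  induction w using Finsupp.induction_linear with
  | zero => simp
  | add w w' hw hw' => simpa using add_mem hw hw'
  | single i u => simpa [dQ_single] using Ideal.mul_mem_left _ u (dval_apply_mem_idealZRS i)

lemma embL_mem_range_dQ_iff {v : Bring} : embL v ∈ LinearMap.range dQ ↔ v ∈ idealZRS := by
  constructor
  · rintro ⟨w, hw⟩
    simpa [hw, embL] using dQ_apply_mem_idealZRS w
  · intro hv
    obtain ⟨a, b, c, rfl⟩ := Submodule.mem_span_triple.mp hv
    refine ⟨Finsupp.single (0, true, false, false) a + Finsupp.single (0, false, true, false) b +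
      Finsupp.single (0, false, false, true) c, ?_⟩
    simp [dQ_single, dval, dvalDelta, dvalExt, embL]

lemma single_mem_of_mem_Bgrade_zero {S : Submodule ℚ Lmod} {i : idxL} {u : Bring}
    (hu : u ∈ Bgrade 0) (hi : Finsupp.single i 1 ∈ S) : Finsupp.single i u ∈ S := by
  obtain ⟨q, rfl⟩ := exists_eq_smul_one_of_mem_Bgrade_zero hu
  rw [← Finsupp.smul_single]
  exact S.smul_mem q hi

lemma LtotalGrade_four_le :
    LtotalGrade 4 ≤ (Bgrade 4).map embL ⊔ Submodule.span ℚ {abL, agL, δL} := by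
  rw [LtotalGrade, Submodule.span_le]
  rintro _ ⟨i, u, hi, hu, rfl⟩
  obtain ⟨_ | _ | n, _ | _, _ | _, _ | _⟩ := i <;> simp [Ldeg] at hi hu ⊢
  · exact Submodule.mem_sup_left ⟨u, hu, rfl⟩
  iterate 3
    rw [Bgrade_eq_bot (by decide), Submodule.mem_bot] at hu
    simp [hu]
  iterate 3
    exact single_mem_of_mem_Bgrade_zero hu
      (Submodule.mem_sup_right (Submodule.subset_span (by simp [abL, agL, δL])))
  all_goals omega

lemma ker_dQ_inf_LtotalGrade_four_le :
    LinearMap.ker dQ ⊓ LtotalGrade 4 ≤ (Bgrade 4).map embL := by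
  rintro x ⟨hx, hgr⟩
  obtain ⟨_, ⟨u, hu, rfl⟩, y, hy, rfl⟩ := Submodule.mem_sup.mp (LtotalGrade_four_le hgr)
  obtain ⟨a, b, c, rfl⟩ := Submodule.mem_span_triple.mp hy
  have hd : dQ (a • abL + b • agL + c • δL) = 0 := by
    simpa [dQ_embL] using LinearMap.mem_ker.mp hx
  simp only [map_add, map_smul, dQ_abL, dQ_agL, dQ_δL] at hd
  have ha : a = 0 := by simpa [zB_ne_zero] using congr($hd (0, false, true, false))
  have hb : b = 0 := by simpa [zB_ne_zero] using congr($hd (0, false, false, true))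
  subst ha hb
  have hc : c = 0 := by
    simpa [rB_sq_sub_sB_sq_ne_zero] using congr($hd (0, true, false, false))
  simpa [hc] using ⟨u, hu, rfl⟩

lemma rB_mul_sB_mem_Bgrade_four : rB * sB ∈ Bgrade 4 := by
  rw [Bgrade, if_pos (by norm_num)]
  exact ⟨X 1 * X 2, (isHomogeneous_X ℚ 1).mul (isHomogeneous_X ℚ 2), rfl⟩

lemma embL_rB_mul_sB_mem : embL (rB * sB) ∈ LinearMap.ker dQ ⊓ LtotalGrade 4 :=
  ⟨dQ_embL _, Submodule.subset_span
    ⟨(0, false, false, false), rB * sB, by simp [Ldeg],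
      by simpa [Ldeg] using rB_mul_sB_mem_Bgrade_four, rfl⟩⟩

lemma embL_rB_mul_sB_notMem_range : embL (rB * sB) ∉ LinearMap.range dQ :=
  fun h => rB_mul_sB_notMem_idealZRS (embL_mem_range_dQ_iff.mp h)

lemma ker_dQ_inf_LtotalGrade_four_le_span_sup_range : LinearMap.ker dQ ⊓ LtotalGrade 4 ≤
    (ℚ ∙ embL (rB * sB)) ⊔ LinearMap.range dQ := by
  refine ker_dQ_inf_LtotalGrade_four_le.trans (Submodule.map_le_iff_le_comap.mpr fun u hu => ?_)
  obtain ⟨_, hw, v, hv, rfl⟩ := Submodule.mem_sup.mp (Bgrade_four_le hu)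
  obtain ⟨q, rfl⟩ := Submodule.mem_span_singleton.mp hw
  rw [Submodule.mem_comap, map_add, map_smul]
  exact Submodule.add_mem_sup (Submodule.smul_mem _ q (Submodule.mem_span_singleton_self _))
    (embL_mem_range_dQ_iff.mpr hv)

theorem statement10 :
    -- `H⁴` (degree-4 cocycles modulo coboundaries) is one-dimensional …
    Module.finrank ℚ
      ↥(Submodule.map (Submodule.mkQ (LinearMap.range dQ))
        (LinearMap.ker dQ ⊓ LtotalGrade 4)) = 1 ∧
    -- … spanned by the class of `1 ⊗ rs`, which is a nonzero class:
    embL (rB * sB) ∈ LinearMap.ker dQ ⊓ LtotalGrade 4 ∧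
    embL (rB * sB) ∉ LinearMap.range dQ ∧
    LinearMap.ker dQ ⊓ LtotalGrade 4 ≤
      Submodule.span ℚ {embL (rB * sB)} ⊔ LinearMap.range dQ :=
  ⟨Submodule.finrank_map_mkQ_eq_one embL_rB_mul_sB_mem embL_rB_mul_sB_notMem_range
      ker_dQ_inf_LtotalGrade_four_le_span_sup_range,
    embL_rB_mul_sB_mem, embL_rB_mul_sB_notMem_range,
    ker_dQ_inf_LtotalGrade_four_le_span_sup_range⟩

end
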